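/- Let u : P₂(ℝ^d) → ℝ be differentiable (in the lifted/Lions sense) with derivative family (∂u(μ)(·))_{μ} satisfying E[|∂u(P_ξ)(ξ) − ∂u(P_{ξ'})(ξ')|²] ≤ C² E[|ξ − ξ'|²] for all ξ, ξ' ∈ L²(Ω;ℝ^d), and for each μ choose the everywhere C-Lipschitz version of ∂u(μ)(·). Then for every μ ∈ P₂(ℝ^d), every N ≥ 1 and every x = (x₁,…,x_N), y = (y₁,…,y_N) ∈ (ℝ^d)^N, |Σ_{i=1}^N ∂_{x_i} ū^N(x)·(y_i − x_i) − (1/N) Σ_{i=1}^N ∂u(μ)(x_i)·(y_i − x_i)| ≤ 2C · W₂(μ̄^N_x, μ) · (N⁻¹ Σ_{i=1}^N |y_i − x_i|²)^{1/2}, where μ̄^N_x = N⁻¹ Σ_{i=1}^N δ_{x_i} and ū^N(x) = u(μ̄^N_x). -/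

import Mathlib

open MeasureTheory ProbabilityTheory
open scoped ENNReal NNReal RealInnerProductSpace

noncomputable section

/-- `ℝ^d`. -/
abbrev Rd (d : ℕ) := EuclideanSpace ℝ (Fin d)

/-- A Borel probability measure on `ℝ^d` of order 2 (finite second moment). -/
def IsP2 {d : ℕ} (μ : Measure (Rd d)) : Prop :=
  IsProbabilityMeasure μ ∧ Integrable (fun x => ‖x‖ ^ 2) μ

/-- A coupling of `μ` and `ν`: a probability measure on `ℝ^d × ℝ^d` with marginals `μ`, `ν`. -/
def IsCoupling {d : ℕ} (π : Measure (Rd d × Rd d)) (μ ν : Measure (Rd d)) : Prop :=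
  IsProbabilityMeasure π ∧ π.map Prod.fst = μ ∧ π.map Prod.snd = ν

/-- The 2-Wasserstein distance between two measures on `ℝ^d`. -/
def W2 {d : ℕ} (μ ν : Measure (Rd d)) : ℝ :=
  sInf { r : ℝ | ∃ π : Measure (Rd d × Rd d), IsCoupling π μ ν ∧
      r = (∫ p, ‖p.1 - p.2‖ ^ 2 ∂π) ^ (1/2 : ℝ) }

/-- The empirical measure `N⁻¹ ∑_{j} δ_{x_j}` of a point `x = (x₁,…,x_N) ∈ (ℝ^d)^N`. -/
def empMeas {d N : ℕ} (x : Fin N → Rd d) : Measure (Rd d) :=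
  ((N : ℝ≥0∞))⁻¹ • ∑ j, Measure.dirac (x j)

/-!
Write `μ̄ = μ̄^N_x`. Letting `g` be a uniformly distributed random index, `z ↦ z ∘ g` is a linear
map `(ℝ^d)^N → L²` whose value at `z` has law `μ̄^N_z`, so the chain rule through the lift gives
`∂_{x_i} ū^N(x) = N⁻¹ ∂u(μ̄)(x_i)`. By Cauchy–Schwarz it then suffices to show
`‖∂u(μ̄) − ∂u(μ)‖_{L²(μ̄)} ≤ 2C W₂(μ̄, μ)`, which holds for any two laws in `P₂`: realise a coupling
as the law of `(ξ, ξ')` and pass through `∂u(μ)(ξ')`, using the `L²` estimate for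
`∂u(μ̄)(ξ) − ∂u(μ)(ξ')` and the `C`-Lipschitz continuity of `∂u(μ)` for `∂u(μ)(ξ') − ∂u(μ)(ξ)`.
Richness is only assumed for laws on `ℝ^d` with a second moment; any law on a standard Borel
space is realised through a bounded Borel injection into `ℝ^d` with a Borel left inverse.
-/

lemma exists_bounded_measurable_map_with_leftInverse {d : ℕ} (hd : 0 < d) {α : Type*}
    [MeasurableSpace α] [StandardBorelSpace α] [Nonempty α] :
    ∃ f : α → Rd d, Measurable f ∧ (∀ a, ‖f a‖ ≤ 2) ∧
      ∃ g : Rd d → α, Measurable g ∧ Function.LeftInverse g f := by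
  obtain ⟨e, he⟩ := exists_measurableEmbedding_real (α := α)
  let i : Fin d := ⟨0, hd⟩
  have htan : Measurable Real.tan := by
    rw [show Real.tan = fun x => Real.sin x / Real.cos x from funext Real.tan_eq_sin_div_cos]
    fun_prop
  refine ⟨fun a => Real.arctan (e a) • EuclideanSpace.single i 1,
    (Real.continuous_arctan.measurable.comp he.measurable).smul_const _, fun a => ?_,
    fun v => Function.extend e id (fun _ => Classical.arbitrary α) (Real.tan (v i)),
    (he.measurable_extend measurable_id measurable_const).comp
      (htan.comp (EuclideanSpace.proj i).continuous.measurable), fun a => ?_⟩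
  · have := Real.arctan_lt_pi_div_two (e a)
    have := Real.neg_pi_div_two_lt_arctan (e a)
    have := Real.pi_lt_d2
    rw [norm_smul, PiLp.norm_single, norm_one, mul_one, Real.norm_eq_abs, abs_le]
    constructor <;> linarith
  · simp [Real.tan_arctan, he.injective.extend_apply]

lemma exists_measurable_map_eq_of_rich {d : ℕ} {Ω : Type*} [MeasurableSpace Ω] {P : Measure Ω}
    (hd : 0 < d)
    (hrich : ∀ μ : Measure (Rd d), IsP2 μ → ∃ X : Lp (Rd d) 2 P, Measure.map (⇑X) P = μ)
    {α : Type*} [MeasurableSpace α] [StandardBorelSpace α] (ρ : Measure α)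
    [IsProbabilityMeasure ρ] : ∃ X : Ω → α, Measurable X ∧ P.map X = ρ := by
  have := nonempty_of_isProbabilityMeasure ρ
  obtain ⟨f, hf, hf_le, g, hg, hgf⟩ := exists_bounded_measurable_map_with_leftInverse (α := α) hd
  have hν : IsP2 (ρ.map f) := by
    refine ⟨Measure.isProbabilityMeasure_map hf.aemeasurable, ?_⟩
    rw [integrable_map_measure (by fun_prop) hf.aemeasurable]
    refine Integrable.of_bound (by fun_prop) 4 (.of_forall fun a => ?_)
    simpa [show (4 : ℝ) = 2 ^ 2 by norm_num] using pow_le_pow_left₀ (norm_nonneg _) (hf_le a) 2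
  obtain ⟨Z, hZ⟩ := hrich _ hν
  have hZm := Lp.aestronglyMeasurable Z
  refine ⟨g ∘ hZm.mk, hg.comp hZm.stronglyMeasurable_mk.measurable, ?_⟩
  rw [← Measure.map_map hg hZm.stronglyMeasurable_mk.measurable, ← Measure.map_congr hZm.ae_eq_mk,
    hZ, Measure.map_map hg hf, hgf.comp_eq_id, Measure.map_id]

lemma memLp_two_of_isP2_map {d : ℕ} {Ω : Type*} [MeasurableSpace Ω] {P : Measure Ω}
    {ξ : Ω → Rd d} (hξ : Measurable ξ) (h : IsP2 (P.map ξ)) : MemLp ξ 2 P :=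
  (memLp_two_iff_integrable_sq_norm hξ.aestronglyMeasurable).2
    ((integrable_map_measure (by fun_prop) hξ.aemeasurable).1 h.2)

section Empirical

variable {d N : ℕ}

lemma empMeas_eq_map_uniform [NeZero N] (x : Fin N → Rd d) :
    empMeas x = (PMF.uniformOfFintype (Fin N)).toMeasure.map x := by
  ext s hs
  rw [Measure.map_apply (measurable_of_countable x) hs, PMF.toMeasure_apply_fintype, empMeas,
    Measure.smul_apply, Measure.coe_finsetSum, Finset.sum_apply, smul_eq_mul, Finset.mul_sum]
  refine Finset.sum_congr rfl fun j _ => ?_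
  by_cases hj : x j ∈ s <;> simp [hj, Measure.dirac_apply' _ hs]

lemma integral_empMeas (x : Fin N → Rd d) (f : Rd d → ℝ) :
    ∫ a, f a ∂(empMeas x) = (N : ℝ)⁻¹ * ∑ j, f (x j) := by
  rw [empMeas, integral_smul_measure,
    integral_finsetSum_measure fun j _ => integrable_dirac enorm_lt_top]
  simp [integral_dirac, smul_eq_mul]

lemma isP2_empMeas [NeZero N] (x : Fin N → Rd d) : IsP2 (empMeas x) := by
  rw [empMeas_eq_map_uniform]
  exact ⟨Measure.isProbabilityMeasure_map (measurable_of_countable x).aemeasurable,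
    (integrable_map_measure (by fun_prop) (measurable_of_countable x).aemeasurable).2 .of_finite⟩

end Empirical

section CompLp

variable {Ω ι E : Type*} [MeasurableSpace Ω] {P : Measure Ω} [IsFiniteMeasure P]
  [Fintype ι] [MeasurableSpace ι] [DiscreteMeasurableSpace ι] [NormedAddCommGroup E]
  {g : Ω → ι} (p : ℝ≥0∞)

lemma memLp_comp_of_discrete (hg : Measurable g) (z : ι → E) : MemLp (z ∘ g) p P :=
  (memLp_map_measure_iff .of_discrete hg.aemeasurable).1 .of_discrete

variable [NormedSpace ℝ E] [FiniteDimensional ℝ E] [Fact (1 ≤ p)]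

def compLpCLM (hg : Measurable g) : (ι → E) →L[ℝ] Lp E p P :=
  LinearMap.toContinuousLinearMap
    { toFun := fun z => (memLp_comp_of_discrete p hg z).toLp
      map_add' := fun _ _ => MemLp.toLp_add _ _
      map_smul' := fun c _ => MemLp.toLp_const_smul c _ }

lemma coeFn_compLpCLM (hg : Measurable g) (z : ι → E) :
    ⇑(compLpCLM (P := P) p hg z) =ᵐ[P] z ∘ g :=
  MemLp.coeFn_toLp (memLp_comp_of_discrete p hg z)

end CompLp

lemma fderiv_comp_empMeas_apply {d N : ℕ} {Ω : Type*} [MeasurableSpace Ω] (P : Measure Ω)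
    [IsFiniteMeasure P] (hd : 0 < d) [NeZero N]
    (hrich : ∀ μ : Measure (Rd d), IsP2 μ → ∃ X : Lp (Rd d) 2 P, Measure.map (⇑X) P = μ)
    (u : Measure (Rd d) → ℝ) (Du : Measure (Rd d) → Rd d → Rd d)
    (hdiff : ∀ X : Lp (Rd d) 2 P, ∃ L : Lp (Rd d) 2 P →L[ℝ] ℝ,
      HasFDerivAt (fun Y : Lp (Rd d) 2 P => u (Measure.map (⇑Y) P)) L X ∧
      ∀ Y : Lp (Rd d) 2 P, L Y = ∫ ω, ⟪Du (Measure.map (⇑X) P) (X ω), Y ω⟫ ∂P)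
    (x h : Fin N → Rd d) :
    fderiv ℝ (fun z : Fin N → Rd d => u (empMeas z)) x h
      = (N : ℝ)⁻¹ * ∑ i, ⟪Du (empMeas x) (x i), h i⟫ := by
  obtain ⟨g, hg, hgP⟩ :=
    exists_measurable_map_eq_of_rich hd hrich (PMF.uniformOfFintype (Fin N)).toMeasure
  let T : (Fin N → Rd d) →L[ℝ] Lp (Rd d) 2 P := compLpCLM 2 hg
  have hlaw (z : Fin N → Rd d) : P.map (T z) = empMeas z := by
    rw [Measure.map_congr (coeFn_compLpCLM 2 hg z),
      ← Measure.map_map (measurable_of_countable z) hg, hgP, empMeas_eq_map_uniform]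
  obtain ⟨L, hL, hLval⟩ := hdiff (T x)
  have hcomp : (fun z => u (empMeas z)) = (fun Y : Lp (Rd d) 2 P => u (P.map Y)) ∘ T := by
    funext z
    simp only [Function.comp_apply, hlaw]
  let F : Fin N → ℝ := fun j => ⟪Du (empMeas x) (x j), h j⟫
  calc fderiv ℝ (fun z => u (empMeas z)) x h
      = ∫ ω, F (g ω) ∂P := by
        rw [hcomp, (hL.comp x T.hasFDerivAt).fderiv, ContinuousLinearMap.comp_apply, hLval, hlaw]
        refine integral_congr_ae ?_
        filter_upwards [coeFn_compLpCLM 2 hg x, coeFn_compLpCLM 2 hg h] with ω hx hh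
        simp only [T, hx, hh, Function.comp_apply, F]
    _ = ∫ j, F j ∂(P.map g) := (integral_map hg.aemeasurable .of_discrete).symm
    _ = (N : ℝ)⁻¹ * ∑ i, F i := by
        simp [hgP, PMF.integral_eq_sum, Finset.mul_sum]

lemma LipschitzWith.memLp_comp {α E F : Type*} [MeasurableSpace α] {μ : Measure α}
    [IsFiniteMeasure μ] [NormedAddCommGroup E] [NormedAddCommGroup F] {p : ℝ≥0∞} {K : ℝ≥0}
    {g : E → F} {f : α → E} (hg : LipschitzWith K g) (hf : MemLp f p μ) :
    MemLp (g ∘ f) p μ := by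
  have hg0 : LipschitzWith (K + 0) fun a => g a - g 0 := hg.sub (LipschitzWith.const _)
  convert (hg0.comp_memLp (sub_self _) hf).add (memLp_const (g 0)) using 1
  ext
  simp

lemma integral_norm_sub_sq_le_of_lipschitz {Ω E F : Type*} [MeasurableSpace Ω] {P : Measure Ω}
    [IsFiniteMeasure P] [NormedAddCommGroup E] [NormedAddCommGroup F] {K : ℝ≥0} {G H : E → F}
    (hG : LipschitzWith K G) (hH : LipschitzWith K H) {ξ ξ' : Ω → E}
    (hξ : MemLp ξ 2 P) (hξ' : MemLp ξ' 2 P)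
    (h : ∫ ω, ‖G (ξ ω) - H (ξ' ω)‖ ^ 2 ∂P ≤ K ^ 2 * ∫ ω, ‖ξ ω - ξ' ω‖ ^ 2 ∂P) :
    ∫ ω, ‖G (ξ ω) - H (ξ ω)‖ ^ 2 ∂P ≤ (2 * K) ^ 2 * ∫ ω, ‖ξ ω - ξ' ω‖ ^ 2 ∂P := by
  have hGξ := hG.memLp_comp hξ
  have hHξ := hH.memLp_comp hξ
  have hHξ' := hH.memLp_comp hξ'
  have hA : Integrable (fun ω => ‖G (ξ ω) - H (ξ' ω)‖ ^ 2) P :=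
    (hGξ.sub hHξ').integrable_norm_pow two_ne_zero
  have hR : Integrable (fun ω => ‖ξ ω - ξ' ω‖ ^ 2) P :=
    (hξ.sub hξ').integrable_norm_pow two_ne_zero
  have hpoint (a b : E) :
      ‖G a - H a‖ ^ 2 ≤ 2 * ‖G a - H b‖ ^ 2 + 2 * K ^ 2 * ‖a - b‖ ^ 2 := by
    have htri : ‖G a - H a‖ ≤ ‖G a - H b‖ + K * ‖a - b‖ := by
      calc ‖G a - H a‖ ≤ ‖G a - H b‖ + ‖H b - H a‖ := norm_sub_le_norm_sub_add_norm_sub _ _ _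
        _ ≤ ‖G a - H b‖ + K * ‖a - b‖ := by
          gcongr
          simpa [norm_sub_rev] using hH.norm_sub_le b a
    nlinarith [norm_nonneg (G a - H a), sq_nonneg (‖G a - H b‖ - K * ‖a - b‖)]
  calc ∫ ω, ‖G (ξ ω) - H (ξ ω)‖ ^ 2 ∂P
      ≤ ∫ ω, (2 * ‖G (ξ ω) - H (ξ' ω)‖ ^ 2 + 2 * K ^ 2 * ‖ξ ω - ξ' ω‖ ^ 2) ∂P :=
        integral_mono ((hGξ.sub hHξ).integrable_norm_pow two_ne_zero)
          ((hA.const_mul 2).add (hR.const_mul _))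
          fun ω => hpoint (ξ ω) (ξ' ω)
    _ = 2 * ∫ ω, ‖G (ξ ω) - H (ξ' ω)‖ ^ 2 ∂P + 2 * K ^ 2 * ∫ ω, ‖ξ ω - ξ' ω‖ ^ 2 ∂P := by
        rw [integral_add (hA.const_mul 2) (hR.const_mul _), integral_const_mul, integral_const_mul]
    _ ≤ (2 * K) ^ 2 * ∫ ω, ‖ξ ω - ξ' ω‖ ^ 2 ∂P := by linarith

lemma le_mul_W2_of_forall_coupling {d : ℕ} {μ ν : Measure (Rd d)} [IsProbabilityMeasure μ]
    [IsProbabilityMeasure ν] {a c : ℝ} (hc : 0 ≤ c)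
    (h : ∀ π, IsCoupling π μ ν → a ≤ c * (∫ p, ‖p.1 - p.2‖ ^ 2 ∂π) ^ (1/2 : ℝ)) :
    a ≤ c * W2 μ ν := by
  have hprod : IsCoupling (μ.prod ν) μ ν := ⟨inferInstance, by simp, by simp⟩
  rw [W2, ← smul_eq_mul, ← Real.sInf_smul_of_nonneg hc]
  refine le_csInf (Set.Nonempty.smul_set ⟨_, μ.prod ν, hprod, rfl⟩) ?_
  rintro _ ⟨_, ⟨π, hπ, rfl⟩, rfl⟩
  exact h π hπ

lemma sqrt_integral_sq_norm_sub_le_W2 {d : ℕ} {Ω : Type*} [MeasurableSpace Ω] (P : Measure Ω)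
    [IsProbabilityMeasure P] (hd : 0 < d)
    (hrich : ∀ μ : Measure (Rd d), IsP2 μ → ∃ X : Lp (Rd d) 2 P, Measure.map (⇑X) P = μ)
    (Du : Measure (Rd d) → Rd d → Rd d) (hBorel : ∀ μ : Measure (Rd d), Measurable (Du μ))
    (C : ℝ≥0)
    (hL2 : ∀ ξ ξ' : Ω → Rd d, Measurable ξ → Measurable ξ' → MemLp ξ 2 P → MemLp ξ' 2 P →
      ∫ ω, ‖Du (Measure.map ξ P) (ξ ω) - Du (Measure.map ξ' P) (ξ' ω)‖ ^ 2 ∂P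
        ≤ C ^ 2 * ∫ ω, ‖ξ ω - ξ' ω‖ ^ 2 ∂P)
    (hLip : ∀ μ : Measure (Rd d), IsP2 μ → LipschitzWith C (Du μ))
    {μ ν : Measure (Rd d)} (hμ : IsP2 μ) (hν : IsP2 ν) :
    √(∫ a, ‖Du μ a - Du ν a‖ ^ 2 ∂μ) ≤ 2 * C * W2 μ ν := by
  have := hμ.1
  have := hν.1
  refine le_mul_W2_of_forall_coupling (by positivity) fun π ⟨hπ, hπμ, hπν⟩ => ?_
  obtain ⟨Z, hZ, hZP⟩ := exists_measurable_map_eq_of_rich hd hrich π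
  have hξ : Measurable (Prod.fst ∘ Z) := measurable_fst.comp hZ
  have hξ' : Measurable (Prod.snd ∘ Z) := measurable_snd.comp hZ
  have hξμ : P.map (Prod.fst ∘ Z) = μ := by rw [← Measure.map_map measurable_fst hZ, hZP, hπμ]
  have hξ'ν : P.map (Prod.snd ∘ Z) = ν := by rw [← Measure.map_map measurable_snd hZ, hZP, hπν]
  have hξL2 := memLp_two_of_isP2_map hξ (hξμ ▸ hμ)
  have hξ'L2 := memLp_two_of_isP2_map hξ' (hξ'ν ▸ hν)
  have hL2Z := hL2 _ _ hξ hξ' hξL2 hξ'L2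
  rw [hξμ, hξ'ν] at hL2Z
  have hmain := integral_norm_sub_sq_le_of_lipschitz (hLip μ hμ) (hLip ν hν) hξL2 hξ'L2 hL2Z
  have hlhs : ∫ a, ‖Du μ a - Du ν a‖ ^ 2 ∂μ = ∫ ω, ‖Du μ (Z ω).1 - Du ν (Z ω).1‖ ^ 2 ∂P := by
    rw [← hξμ, integral_map hξ.aemeasurable (by fun_prop)]
    rfl
  have hrhs : ∫ p, ‖p.1 - p.2‖ ^ 2 ∂π = ∫ ω, ‖(Z ω).1 - (Z ω).2‖ ^ 2 ∂P := by
    rw [← hZP, integral_map hZ.aemeasurable (by fun_prop)]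
  rw [hlhs, hrhs, ← Real.sqrt_eq_rpow, ← Real.sqrt_sq (by positivity : (0 : ℝ) ≤ 2 * C),
    ← Real.sqrt_mul (sq_nonneg _)]
  exact Real.sqrt_le_sqrt hmain

lemma abs_mul_sum_inner_le {ι E : Type*} [Fintype ι] [NormedAddCommGroup E]
    [InnerProductSpace ℝ E] {w : ℝ} (hw : 0 ≤ w) (a b : ι → E) :
    |w * ∑ i, ⟪a i, b i⟫| ≤ √(w * ∑ i, ‖a i‖ ^ 2) * √(w * ∑ i, ‖b i‖ ^ 2) := by
  have hcs : |∑ i, ⟪a i, b i⟫| ≤ √(∑ i, ‖a i‖ ^ 2) * √(∑ i, ‖b i‖ ^ 2) :=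
    (Finset.abs_sum_le_sum_abs _ _).trans <|
      (Finset.sum_le_sum fun i _ => abs_real_inner_le_norm _ _).trans <|
        Real.sum_mul_le_sqrt_mul_sqrt _ _ _
  rw [abs_mul, abs_of_nonneg hw, Real.sqrt_mul hw, Real.sqrt_mul hw]
  calc w * |∑ i, ⟪a i, b i⟫| ≤ w * (√(∑ i, ‖a i‖ ^ 2) * √(∑ i, ‖b i‖ ^ 2)) := by gcongr
    _ = √w * √w * (√(∑ i, ‖a i‖ ^ 2) * √(∑ i, ‖b i‖ ^ 2)) := by rw [Real.mul_self_sqrt hw]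
    _ = _ := by ring

/-- **Proposition 14:3:1 of Carmona-Delarue.** Let `u : P₂(ℝ^d) → ℝ` be
differentiable in the lifted (Lions) sense with derivative family `(Du μ)_μ` satisfying the
`L²`-Lipschitz estimate `E[|Du(P_ξ)(ξ) − Du(P_{ξ'})(ξ')|²] ≤ C² E[|ξ − ξ'|²]`, and assume the
everywhere-`C`-Lipschitz version of each `Du μ` has been chosen. Then for every `μ ∈ P₂(ℝ^d)`,
every `N ≥ 1` and all `x, y ∈ (ℝ^d)^N`, the derivative of the empirical projection
`ū^N(x) = u(μ̄^N_x)` satisfies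
`|∂ū^N(x)·(y − x) − (1/N) ∑ᵢ ⟪Du(μ)(xᵢ), yᵢ − xᵢ⟫| ≤ 2C W₂(μ̄^N_x, μ) ((1/N) ∑ᵢ |yᵢ − xᵢ|²)^{1/2}`. -/
theorem empirical_gradient_approximation
    {d : ℕ} {Ω : Type} [MeasurableSpace Ω] (P : Measure Ω) [IsProbabilityMeasure P]
    (hrich : ∀ μ : Measure (Rd d), IsP2 μ →
      ∃ X : Lp (Rd d) 2 P, Measure.map (⇑X) P = μ)
    (u : Measure (Rd d) → ℝ) (Du : Measure (Rd d) → Rd d → Rd d)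
    (hBorel : ∀ μ : Measure (Rd d), Measurable (Du μ))
    (hdiff : ∀ X : Lp (Rd d) 2 P, ∃ L : Lp (Rd d) 2 P →L[ℝ] ℝ,
      HasFDerivAt (fun Y : Lp (Rd d) 2 P => u (Measure.map (⇑Y) P)) L X ∧
      ∀ Y : Lp (Rd d) 2 P, L Y = ∫ ω, ⟪Du (Measure.map (⇑X) P) (X ω), Y ω⟫ ∂P)
    (C : ℝ) (hC : 0 ≤ C)
    (hL2 : ∀ ξ ξ' : Ω → Rd d, Measurable ξ → Measurable ξ' → MemLp ξ 2 P → MemLp ξ' 2 P →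
      ∫ ω, ‖Du (Measure.map ξ P) (ξ ω) - Du (Measure.map ξ' P) (ξ' ω)‖ ^ 2 ∂P
        ≤ C ^ 2 * ∫ ω, ‖ξ ω - ξ' ω‖ ^ 2 ∂P)
    (hLipVersion : ∀ μ : Measure (Rd d), IsP2 μ →
      ∀ a b : Rd d, ‖Du μ a - Du μ b‖ ≤ C * ‖a - b‖)
    (μ : Measure (Rd d)) (hμ : IsP2 μ)
    (N : ℕ) (hN : 1 ≤ N) (x y : Fin N → Rd d) :
    |fderiv ℝ (fun z : Fin N → Rd d => u (empMeas z)) x (y - x)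
        - (N : ℝ)⁻¹ * ∑ i, ⟪Du μ (x i), y i - x i⟫|
      ≤ 2 * C * W2 (empMeas x) μ
          * Real.sqrt ((N : ℝ)⁻¹ * ∑ i, ‖y i - x i‖ ^ 2) := by
  rcases Nat.eq_zero_or_pos d with rfl | hd
  · have hyx (i : Fin N) : y i - x i = 0 := Subsingleton.elim _ _
    simp [hyx, show y - x = 0 from funext hyx]
  have : NeZero N := ⟨by omega⟩
  let K : ℝ≥0 := ⟨C, hC⟩
  have hLip (ν : Measure (Rd d)) (hν : IsP2 ν) : LipschitzWith K (Du ν) :=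
    LipschitzWith.of_dist_le_mul fun a b => by
      rw [dist_eq_norm, dist_eq_norm]
      exact hLipVersion ν hν a b
  have hW2 := sqrt_integral_sq_norm_sub_le_W2 P hd hrich Du hBorel K hL2 hLip
    (isP2_empMeas x) hμ
  rw [integral_empMeas] at hW2
  rw [fderiv_comp_empMeas_apply P hd hrich u Du hdiff, ← mul_sub, ← Finset.sum_sub_distrib]
  simp only [Pi.sub_apply, ← inner_sub_left]
  calc _ ≤ √((N : ℝ)⁻¹ * ∑ i, ‖Du (empMeas x) (x i) - Du μ (x i)‖ ^ 2)
        * √((N : ℝ)⁻¹ * ∑ i, ‖y i - x i‖ ^ 2) := abs_mul_sum_inner_le (by positivity) _ _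
    _ ≤ _ := by gcongr; exact hW2
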